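/- Uniform second-order convergence of the complete flux scheme (main theorem): let s ∈ C⁴([0,1]) and let φ be the solution of the boundary value problem −d φ'' + b φ' = s on (0,1) with φ(0) = φ_L, φ(1) = φ_R. Let (φ_j)_{j=1}^N be the complete flux scheme approximation, i.e. φ_1 = φ_L, φ_N = φ_R and L^h φ_j = W^h s(x_j) for j = 2,…,N−1. Then there exists a constant C > 0, independent of d and h, such that for all d ∈ (0,1], all N ≥ 3 and all j = 1,…,N, the discretization error satisfies |φ(x_j) − φ_j| ≤ C h². -/

import Mathlib

/-!
Integrating the flux `b φ - d φ'` against exponential kernels expresses `L^h φ(x)` as a kernel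
integral of `Lφ = s` over `[x - h, x + h]` (`cfsKernelIntegral`). The kernels are nonnegative and
bounded by `exp (b h / d) - 1`, which the prefactor `a_E / b = 1 / (h (exp (b h / d) - 1))`
cancels exactly, so the representation is bounded uniformly in `d`. The scheme is exact for affine
sources, hence the truncation error is controlled by the Taylor remainder of `s`:
`|τ| ≤ (5/4) max |s''| h²`. Finally `a_W - a_E = b / h` makes the grid function `x_j` a barrier
(`L^h x_j = b`), and the discrete maximum principle turns the truncation bound into
`|φ(x_j) - φ_j| ≤ (5/4) max |s''| h² / b`.
-/

/-- Bernoulli function `B(z) = z / (e^z − 1)`. -/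
noncomputable def Bern (z : ℝ) : ℝ := z / (Real.exp z - 1)

/-- Weight function `W(z) = (e^z − 1 − z) / (z (e^z − 1))`. -/
noncomputable def Wt (z : ℝ) : ℝ := (Real.exp z - 1 - z) / (z * (Real.exp z - 1))

/-- Complete flux scheme coefficient `a_W = d h⁻² B(−P)` with `P = b h / d`. -/
noncomputable def cfsAW (b d h : ℝ) : ℝ := d / h ^ 2 * Bern (-(b * h / d))

/-- Complete flux scheme coefficient `a_E = d h⁻² B(P)` with `P = b h / d`. -/
noncomputable def cfsAE (b d h : ℝ) : ℝ := d / h ^ 2 * Bern (b * h / d)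

/-- Complete flux scheme coefficient `a_C = a_W + a_E`. -/
noncomputable def cfsAC (b d h : ℝ) : ℝ := cfsAW b d h + cfsAE b d h

/-- Complete flux scheme weight `b_W = 1/2 − W(P)`. -/
noncomputable def cfsBW (b d h : ℝ) : ℝ := 1 / 2 - Wt (b * h / d)

/-- Complete flux scheme weight `b_C = 1/2 + W(P)`. -/
noncomputable def cfsBC (b d h : ℝ) : ℝ := 1 / 2 + Wt (b * h / d)

/-- Discrete operator `L^h φ (x) = −a_W φ(x−h) + a_C φ(x) − a_E φ(x+h)`. -/
noncomputable def cfsLh (b d h : ℝ) (φ : ℝ → ℝ) (x : ℝ) : ℝ :=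
  -cfsAW b d h * φ (x - h) + cfsAC b d h * φ x - cfsAE b d h * φ (x + h)

/-- Weighting operator `W^h s (x) = b_W s(x−h) + b_C s(x) + b_E s(x+h)` (with `b_E = 0`). -/
noncomputable def cfsWh (b d h : ℝ) (s : ℝ → ℝ) (x : ℝ) : ℝ :=
  cfsBW b d h * s (x - h) + cfsBC b d h * s x + 0 * s (x + h)

/-- Continuous operator `L φ = −d φ'' + b φ'`. -/
noncomputable def contL (b d : ℝ) (φ : ℝ → ℝ) (x : ℝ) : ℝ :=
  -d * iteratedDeriv 2 φ x + b * deriv φ x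

/-- Truncation error of the complete flux scheme at a point `x`:
`τ = L^h φ(x) − W^h (L φ)(x)`. -/
noncomputable def cfsTau (b d h : ℝ) (φ : ℝ → ℝ) (x : ℝ) : ℝ :=
  cfsLh b d h φ x - cfsWh b d h (contL b d φ) x

open Real Set

theorem Bern_neg (z : ℝ) : Bern (-z) = exp z * Bern z := by
  rcases eq_or_ne z 0 with rfl | hz
  · simp [Bern]
  have h1 : exp z - 1 ≠ 0 := by rwa [sub_ne_zero, Ne, exp_eq_one_iff]
  have h2 : 1 - exp z ≠ 0 := by rwa [← neg_sub, neg_ne_zero]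
  rw [Bern, Bern, exp_neg]
  field_simp
  ring

theorem Bern_pos {z : ℝ} (hz : 0 < z) : 0 < Bern z :=
  div_pos hz (sub_pos.mpr (one_lt_exp_iff.mpr hz))

theorem Wt_nonneg {z : ℝ} (hz : 0 < z) : 0 ≤ Wt z := by
  have := add_one_le_exp z
  have := one_lt_exp_iff.mpr hz
  unfold Wt; apply div_nonneg <;> nlinarith

theorem Wt_le_one {z : ℝ} (hz : 0 < z) : Wt z ≤ 1 := by
  have h1 := one_lt_exp_iff.mpr hz
  have h2 : exp z - 1 ≤ z * exp z := by
    have := add_one_le_exp (-z)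
    rw [exp_neg] at this
    have := mul_le_mul_of_nonneg_right this (exp_pos z).le
    rw [add_mul, inv_mul_cancel₀ (exp_pos z).ne'] at this
    linarith
  unfold Wt
  rw [div_le_one (by nlinarith)]
  nlinarith

section Coefficients

variable {b d h : ℝ}

theorem exp_cfs_sub_one_pos (hb : 0 < b) (hd : 0 < d) (hh : 0 < h) : 0 < exp (b * h / d) - 1 :=
  sub_pos.mpr (one_lt_exp_iff.mpr (by positivity))

theorem cfsAE_eq (hb : 0 < b) (hd : 0 < d) (hh : 0 < h) :
    cfsAE b d h = b / (h * (exp (b * h / d) - 1)) := by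
  have := (exp_cfs_sub_one_pos hb hd hh).ne'
  unfold cfsAE Bern
  field_simp

theorem cfsAW_eq : cfsAW b d h = exp (b * h / d) * cfsAE b d h := by
  rw [cfsAW, cfsAE, Bern_neg]; ring

theorem cfsAE_pos (hb : 0 < b) (hd : 0 < d) (hh : 0 < h) : 0 < cfsAE b d h :=
  mul_pos (by positivity) (Bern_pos (by positivity))

theorem cfsAW_pos (hb : 0 < b) (hd : 0 < d) (hh : 0 < h) : 0 < cfsAW b d h := by
  rw [cfsAW_eq]; exact mul_pos (exp_pos _) (cfsAE_pos hb hd hh)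

theorem cfsAW_sub_cfsAE (hb : 0 < b) (hd : 0 < d) (hh : 0 < h) :
    cfsAW b d h - cfsAE b d h = b / h := by
  have := (exp_cfs_sub_one_pos hb hd hh).ne'
  rw [cfsAW_eq, cfsAE_eq hb hd hh]
  field_simp

theorem abs_cfsBW_le (hb : 0 < b) (hd : 0 < d) (hh : 0 < h) : |cfsBW b d h| ≤ 1 / 2 := by
  have hP : 0 < b * h / d := by positivity
  rw [cfsBW, abs_le]
  constructor <;> linarith [Wt_nonneg hP, Wt_le_one hP]

end Coefficients

section KernelIntegral

noncomputable def cfsKernelIntegral (b d h : ℝ) (g : ℝ → ℝ) (x : ℝ) : ℝ :=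
  cfsAE b d h / b *
    ((∫ y in x..x + h, (exp (b / d * (x + h - y)) - 1) * g y) +
      ∫ y in x - h..x, (exp (b * h / d) - exp (b / d * (x - y))) * g y)

variable {b d h : ℝ}

theorem integral_exp_mul_flux (hd : d ≠ 0) {φ φ' φ'' : ℝ → ℝ}
    (hφ : ∀ y, HasDerivAt φ (φ' y) y) (hφ' : ∀ y, HasDerivAt φ' (φ'' y) y)
    (hφ'' : Continuous φ'') (μ B a c : ℝ) :
    ∫ y in a..c, (exp (b / d * (μ - y)) - B) * (b * φ' y - d * φ'' y) =
      (-(d * exp (b / d * (μ - c)) * φ' c) - B * (b * φ c - d * φ' c)) -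
        (-(d * exp (b / d * (μ - a)) * φ' a) - B * (b * φ a - d * φ' a)) := by
  have hc : Continuous φ' := continuous_iff_continuousAt.mpr fun y => (hφ' y).continuousAt
  refine intervalIntegral.integral_eq_sub_of_hasDerivAt
    (f := fun y => -(d * exp (b / d * (μ - y)) * φ' y) - B * (b * φ y - d * φ' y))
    (fun y _ => ?_) (Continuous.intervalIntegrable (by fun_prop) _ _)
  have hexp : HasDerivAt (fun y => exp (b / d * (μ - y)))
      (exp (b / d * (μ - y)) * (b / d * -1)) y :=
    (((hasDerivAt_id y).const_sub μ).const_mul (b / d)).exp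
  convert ((hexp.const_mul d).fun_mul (hφ' y)).fun_neg.fun_sub
    ((((hφ y).const_mul b).fun_sub ((hφ' y).const_mul d)).const_mul B) using 1
  field_simp
  ring

theorem cfsLh_eq_cfsKernelIntegral (hb : 0 < b) (hd : 0 < d) (hh : 0 < h) {φ φ' φ'' : ℝ → ℝ}
    (hφ : ∀ y, HasDerivAt φ (φ' y) y) (hφ' : ∀ y, HasDerivAt φ' (φ'' y) y)
    (hφ'' : Continuous φ'') (x : ℝ) :
    cfsLh b d h φ x = cfsKernelIntegral b d h (fun y => b * φ' y - d * φ'' y) x := by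
  have := (exp_cfs_sub_one_pos hb hd hh).ne'
  have hR := integral_exp_mul_flux (b := b) hd.ne' hφ hφ' hφ'' (x + h) 1 x (x + h)
  have hL := integral_exp_mul_flux (b := b) hd.ne' hφ hφ' hφ'' x (exp (b * h / d)) (x - h) x
  have hL' : ∫ y in x - h..x, (exp (b * h / d) - exp (b / d * (x - y))) * (b * φ' y - d * φ'' y)
      = -∫ y in x - h..x, (exp (b / d * (x - y)) - exp (b * h / d)) * (b * φ' y - d * φ'' y) := by
    rw [← intervalIntegral.integral_neg]
    congr 1; ext y; ring
  rw [cfsKernelIntegral, hL', hR, hL, cfsLh, cfsAC, cfsAW_eq, cfsAE_eq hb hd hh]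
  simp only [sub_self, mul_zero, exp_zero, add_sub_cancel_left, sub_sub_cancel]
  field_simp
  ring

theorem cfsKernelIntegral_affine (hb : 0 < b) (hd : 0 < d) (hh : 0 < h) (α β x : ℝ) :
    cfsKernelIntegral b d h (fun y => α + β * (y - x)) x =
      cfsWh b d h (fun y => α + β * (y - x)) x := by
  have := (exp_cfs_sub_one_pos hb hd hh).ne'
  -- the affine function is `b q' - d q''` for this quadratic `q`
  set c := α / b + β * d / b ^ 2 with hc
  have hq : ∀ y, HasDerivAt (fun y => c * y + β / (2 * b) * (y - x) ^ 2)
      (c + β / b * (y - x)) y := fun y => by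
    refine (((hasDerivAt_id' y).const_mul c).fun_add
      ((((hasDerivAt_id' y).sub_const x).fun_pow 2).const_mul (β / (2 * b)))).congr_deriv ?_
    field_simp
    ring
  have hq' : ∀ y, HasDerivAt (fun y => c + β / b * (y - x)) (β / b) y := fun y => by
    simpa using (((hasDerivAt_id y).sub_const x).const_mul (β / b)).const_add c
  have hflux : (fun y => b * (c + β / b * (y - x)) - d * (β / b)) = fun y => α + β * (y - x) := by
    ext y; rw [hc]; field_simp; ring
  rw [← hflux, ← cfsLh_eq_cfsKernelIntegral hb hd hh hq hq' continuous_const, cfsLh, cfsWh,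
    cfsAC, cfsAW_eq, cfsAE_eq hb hd hh, cfsBW, cfsBC, Wt]
  field_simp
  ring

theorem cfsKernelIntegral_add {g₁ g₂ : ℝ → ℝ} (hg₁ : Continuous g₁) (hg₂ : Continuous g₂) (x : ℝ) :
    cfsKernelIntegral b d h (g₁ + g₂) x =
      cfsKernelIntegral b d h g₁ x + cfsKernelIntegral b d h g₂ x := by
  simp only [cfsKernelIntegral, Pi.add_apply, mul_add]
  rw [intervalIntegral.integral_add, intervalIntegral.integral_add]
  · ring
  all_goals exact Continuous.intervalIntegrable (by fun_prop) _ _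

theorem cfsKernelIntegral_congr (hh : 0 ≤ h) {g₁ g₂ : ℝ → ℝ} {x : ℝ}
    (hg : EqOn g₁ g₂ (Icc (x - h) (x + h))) :
    cfsKernelIntegral b d h g₁ x = cfsKernelIntegral b d h g₂ x := by
  have hR : uIcc x (x + h) ⊆ Icc (x - h) (x + h) := by
    rw [uIcc_of_le (by linarith)]; exact Icc_subset_Icc (by linarith) le_rfl
  have hL : uIcc (x - h) x ⊆ Icc (x - h) (x + h) := by
    rw [uIcc_of_le (by linarith)]; exact Icc_subset_Icc le_rfl (by linarith)
  rw [cfsKernelIntegral, cfsKernelIntegral,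
    intervalIntegral.integral_congr fun y hy => congrArg _ (hg (hR hy)),
    intervalIntegral.integral_congr fun y hy => congrArg _ (hg (hL hy))]

theorem abs_integral_mul_le_of_abs_le {K g : ℝ → ℝ} {a c A ε : ℝ} (hac : a ≤ c)
    (hK : ∀ y ∈ Icc a c, |K y| ≤ A) (hg : ∀ y ∈ Icc a c, |g y| ≤ ε) :
    |∫ y in a..c, K y * g y| ≤ A * ε * (c - a) := by
  have := intervalIntegral.norm_integral_le_of_norm_le_const (f := fun y => K y * g y)
    (C := A * ε) fun y hy => by
      rw [uIoc_of_le hac] at hy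
      have hy := Ioc_subset_Icc_self hy
      rw [Real.norm_eq_abs, abs_mul]
      exact mul_le_mul (hK y hy) (hg y hy) (abs_nonneg _) ((abs_nonneg _).trans (hK y hy))
  rwa [Real.norm_eq_abs, abs_of_nonneg (sub_nonneg.mpr hac)] at this

theorem abs_cfsKernelIntegral_le (hb : 0 < b) (hd : 0 < d) (hh : 0 < h) {g : ℝ → ℝ} {x ε : ℝ}
    (hg : ∀ y ∈ Icc (x - h) (x + h), |g y| ≤ ε) :
    |cfsKernelIntegral b d h g x| ≤ 2 * ε := by
  have := (exp_cfs_sub_one_pos hb hd hh).ne'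
  have hexp : ∀ t, 0 ≤ t → t ≤ h → 1 ≤ exp (b / d * t) ∧ exp (b / d * t) ≤ exp (b * h / d) :=
    fun t ht0 hth => ⟨one_le_exp (by positivity),
      exp_le_exp.mpr (by rw [mul_div_right_comm]; gcongr)⟩
  have hKR : ∀ y ∈ Icc x (x + h), |exp (b / d * (x + h - y)) - 1| ≤ exp (b * h / d) - 1 := by
    intro y hy
    obtain ⟨h1, h2⟩ := hexp (x + h - y) (by linarith [hy.2]) (by linarith [hy.1])
    rw [abs_of_nonneg (by linarith)]
    linarith
  have hKL : ∀ y ∈ Icc (x - h) x,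
      |exp (b * h / d) - exp (b / d * (x - y))| ≤ exp (b * h / d) - 1 := by
    intro y hy
    obtain ⟨h1, h2⟩ := hexp (x - y) (by linarith [hy.2]) (by linarith [hy.1])
    rw [abs_of_nonneg (by linarith)]
    linarith
  have hR := abs_integral_mul_le_of_abs_le (by linarith) hKR
    fun y hy => hg y (Icc_subset_Icc (by linarith) le_rfl hy)
  have hL := abs_integral_mul_le_of_abs_le (by linarith) hKL
    fun y hy => hg y (Icc_subset_Icc le_rfl (by linarith) hy)
  rw [add_sub_cancel_left] at hR
  rw [sub_sub_cancel] at hL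
  have hc : 0 < cfsAE b d h / b := div_pos (cfsAE_pos hb hd hh) hb
  rw [cfsKernelIntegral, abs_mul, abs_of_pos hc]
  calc _ ≤ cfsAE b d h / b * ((exp (b * h / d) - 1) * ε * h + (exp (b * h / d) - 1) * ε * h) :=
        mul_le_mul_of_nonneg_left ((abs_add_le _ _).trans (add_le_add hR hL)) hc.le
    _ = 2 * ε := by
        rw [cfsAE_eq hb hd hh]
        field_simp
        ring

end KernelIntegral

theorem abs_sub_sub_deriv_mul_le {f : ℝ → ℝ} (hf : ContDiff ℝ 2 f) {s : Set ℝ} (hs : Convex ℝ s)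
    {M : ℝ} (hM : ∀ z ∈ s, |iteratedDeriv 2 f z| ≤ M) {x y : ℝ} (hx : x ∈ s) (hy : y ∈ s) :
    |f y - f x - deriv f x * (y - x)| ≤ M / 2 * (y - x) ^ 2 := by
  rcases eq_or_ne x y with rfl | hxy
  · simp
  obtain ⟨z, hz, hrem⟩ :=
    taylor_mean_remainder_lagrange_iteratedDeriv (n := 1) hxy hf.contDiffOn
  have htaylor : taylorWithinEval f 1 (uIcc x y) x y = f x + deriv f x * (y - x) := by
    rw [taylorWithinEval_succ, taylor_within_zero_eval, iteratedDerivWithin_one,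
      (hf.differentiable (by norm_num) x).derivWithin (uniqueDiffOn_uIcc hxy x left_mem_uIcc)]
    simp [mul_comm]
  have hzs : z ∈ s := hs.segment_subset hx hy (segment_eq_uIcc x y ▸ uIoo_subset_uIcc_self hz)
  rw [htaylor] at hrem
  rw [show f y - f x - deriv f x * (y - x) = f y - (f x + deriv f x * (y - x)) by ring, hrem,
    abs_div, abs_mul, abs_sq]
  norm_num
  nlinarith [hM z hzs, sq_nonneg (y - x)]

theorem contL_eq (b d : ℝ) (φ : ℝ → ℝ) :
    contL b d φ = fun y => b * deriv φ y - d * deriv (deriv φ) y := by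
  ext y
  rw [contL, iteratedDeriv_succ, iteratedDeriv_one]
  ring

theorem abs_cfsTau_le {b d h : ℝ} (hb : 0 < b) (hd : 0 < d) (hh : 0 < h) {φ s : ℝ → ℝ}
    (hφ : ContDiff ℝ 2 φ) (hs : ContDiff ℝ 2 s) {x M : ℝ}
    (hLφ : EqOn (contL b d φ) s (Icc (x - h) (x + h)))
    (hM : ∀ y ∈ Icc (x - h) (x + h), |iteratedDeriv 2 s y| ≤ M) :
    |cfsTau b d h φ x| ≤ 5 / 4 * M * h ^ 2 := by
  have hx : x ∈ Icc (x - h) (x + h) := ⟨by linarith, by linarith⟩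
  have hxh : x - h ∈ Icc (x - h) (x + h) := ⟨le_rfl, by linarith⟩
  have hM0 : 0 ≤ M := (abs_nonneg _).trans (hM x hx)
  set p : ℝ → ℝ := fun y => s x + deriv s x * (y - x) with hp
  have hr : ∀ y ∈ Icc (x - h) (x + h), |(s - p) y| ≤ M / 2 * h ^ 2 := fun y hy => by
    have hyx : (y - x) ^ 2 ≤ h ^ 2 := sq_le_sq' (by linarith [hy.1]) (by linarith [hy.2])
    calc |(s - p) y| = |s y - s x - deriv s x * (y - x)| := by simp only [hp, Pi.sub_apply]; ring_nf
      _ ≤ M / 2 * (y - x) ^ 2 := abs_sub_sub_deriv_mul_le hs (convex_Icc _ _) hM hx hy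
      _ ≤ M / 2 * h ^ 2 := by gcongr
  obtain ⟨hφ1, -, hφ2⟩ := contDiff_succ_iff_deriv.mp (show ContDiff ℝ (1 + 1) φ from hφ)
  have hLh : cfsLh b d h φ x = cfsKernelIntegral b d h (s - p) x + cfsWh b d h p x := by
    rw [cfsLh_eq_cfsKernelIntegral hb hd hh (fun y => (hφ1 y).hasDerivAt)
      (fun y => (hφ2.differentiable one_ne_zero y).hasDerivAt) (hφ2.continuous_deriv le_rfl),
      ← contL_eq, cfsKernelIntegral_congr hh.le hLφ, ← cfsKernelIntegral_affine hb hd hh,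
      ← cfsKernelIntegral_add (by fun_prop) (by fun_prop), sub_add_cancel]
  have hWh : cfsWh b d h (contL b d φ) x = cfsWh b d h p x + cfsBW b d h * (s - p) (x - h) := by
    simp only [cfsWh, hLφ hx, hLφ hxh, Pi.sub_apply, hp]
    ring
  calc |cfsTau b d h φ x|
      = |cfsKernelIntegral b d h (s - p) x - cfsBW b d h * (s - p) (x - h)| := by
        rw [cfsTau, hLh, hWh]; ring_nf
    _ ≤ 2 * (M / 2 * h ^ 2) + 1 / 2 * (M / 2 * h ^ 2) := by
        refine (abs_sub _ _).trans (add_le_add (abs_cfsKernelIntegral_le hb hd hh hr) ?_)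
        rw [abs_mul]
        exact mul_le_mul (abs_cfsBW_le hb hd hh) (hr _ hxh) (abs_nonneg _) (by norm_num)
    _ = 5 / 4 * M * h ^ 2 := by ring

section DiscreteMaximumPrinciple

def threePointOp (aW aE : ℝ) (v : ℕ → ℝ) (j : ℕ) : ℝ :=
  -aW * v (j - 1) + (aW + aE) * v j - aE * v (j + 1)

variable {aW aE : ℝ} {N : ℕ}

-- The smallest minimiser of `v` on `[1, N]` cannot be interior: `threePointOp` is negative there.
theorem nonneg_of_threePointOp_nonneg (hW : 0 < aW) (hE : 0 ≤ aE) {v : ℕ → ℝ}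
    (h1 : 0 ≤ v 1) (hN : 0 ≤ v N) (hv : ∀ j, 2 ≤ j → j ≤ N - 1 → 0 ≤ threePointOp aW aE v j) :
    ∀ j, 1 ≤ j → j ≤ N → 0 ≤ v j := by
  intro j hj1 hjN
  have hmin : ∃ m, 1 ≤ m ∧ m ≤ N ∧ ∀ k, 1 ≤ k → k ≤ N → v m ≤ v k := by
    obtain ⟨m, hm, hmin⟩ := (Finset.Icc 1 N).exists_min_image v ⟨j, Finset.mem_Icc.mpr ⟨hj1, hjN⟩⟩
    rw [Finset.mem_Icc] at hm
    exact ⟨m, hm.1, hm.2, fun k hk1 hkN => hmin k (Finset.mem_Icc.mpr ⟨hk1, hkN⟩)⟩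
  obtain ⟨hm1, hmN, hm⟩ := Nat.find_spec hmin
  set m := Nat.find hmin
  refine le_trans ?_ (hm j hj1 hjN)
  rcases eq_or_lt_of_le hm1 with h | hm1
  · rwa [← h]
  rcases eq_or_lt_of_le hmN with h | hmN
  · rwa [h]
  have hleft : v m < v (m - 1) := by
    have := Nat.find_min hmin (show m - 1 < m by omega)
    push Not at this
    obtain ⟨k, hk1, hkN, hk⟩ := this (by omega) (by omega)
    exact (hm k hk1 hkN).trans_lt hk
  have hright := hm (m + 1) (by omega) (by omega)
  have := hv m (by omega) (by omega)
  unfold threePointOp at this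
  nlinarith [mul_pos hW (sub_pos.mpr hleft), mul_nonneg hE (sub_nonneg.mpr hright)]

theorem abs_le_of_threePointOp_le (hW : 0 < aW) (hE : 0 ≤ aE) {e ψ : ℕ → ℝ}
    (he1 : e 1 = 0) (heN : e N = 0) (hψ1 : 0 ≤ ψ 1) (hψN : 0 ≤ ψ N)
    (hψ : ∀ j, 2 ≤ j → j ≤ N - 1 → |threePointOp aW aE e j| ≤ threePointOp aW aE ψ j) :
    ∀ j, 1 ≤ j → j ≤ N → |e j| ≤ ψ j := by
  have hlin : ∀ (σ : ℝ) j, threePointOp aW aE (fun i => ψ i + σ * e i) j =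
      threePointOp aW aE ψ j + σ * threePointOp aW aE e j := fun σ j => by
    simp only [threePointOp]; ring
  have key : ∀ σ : ℝ, |σ| ≤ 1 → ∀ j, 1 ≤ j → j ≤ N → 0 ≤ ψ j + σ * e j := fun σ hσ =>
    nonneg_of_threePointOp_nonneg hW hE (by simpa [he1]) (by simpa [heN]) fun j hj1 hjN => by
      rw [hlin]
      nlinarith [abs_le.mp (hψ j hj1 hjN), abs_le.mp hσ]
  intro j hj1 hjN
  have := key 1 (by norm_num) j hj1 hjN
  have := key (-1) (by norm_num) j hj1 hjN
  rw [abs_le]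
  constructor <;> linarith

end DiscreteMaximumPrinciple

theorem threePointOp_affine (aW aE c h : ℝ) {i : ℕ} (hi : 1 ≤ i) :
    threePointOp aW aE (fun k => c * (((k : ℝ) - 1) * h)) i = c * ((aW - aE) * h) := by
  simp only [threePointOp, Nat.cast_sub hi, Nat.cast_add, Nat.cast_one]
  ring

theorem threePointOp_error_eq_cfsTau {b d h : ℝ} {φ s : ℝ → ℝ} {φv : ℕ → ℝ} {i : ℕ} (hi : 1 ≤ i)
    (hscheme : -cfsAW b d h * φv (i - 1) + cfsAC b d h * φv i - cfsAE b d h * φv (i + 1) =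
      cfsWh b d h s (((i : ℝ) - 1) * h))
    (hL₁ : contL b d φ (((i : ℝ) - 1) * h - h) = s (((i : ℝ) - 1) * h - h))
    (hL₂ : contL b d φ (((i : ℝ) - 1) * h) = s (((i : ℝ) - 1) * h)) :
    threePointOp (cfsAW b d h) (cfsAE b d h) (fun k => φ (((k : ℝ) - 1) * h) - φv k) i =
      cfsTau b d h φ (((i : ℝ) - 1) * h) := by
  have h1 : (((i - 1 : ℕ) : ℝ) - 1) * h = ((i : ℝ) - 1) * h - h := by
    rw [Nat.cast_sub hi]; ring
  have h2 : (((i + 1 : ℕ) : ℝ) - 1) * h = ((i : ℝ) - 1) * h + h := by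
    push_cast; ring
  rw [cfsTau, cfsLh, cfsWh, hL₁, hL₂, threePointOp, h1, h2,
    ← cfsAC]
  unfold cfsWh at hscheme
  linear_combination -hscheme

theorem continuous_contL (b d : ℝ) {φ : ℝ → ℝ} (hφ : ContDiff ℝ 2 φ) : Continuous (contL b d φ) :=
  (continuous_const.mul (hφ.continuous_iteratedDeriv 2 le_rfl)).add
    (continuous_const.mul (hφ.continuous_deriv one_le_two))

theorem Set.EqOn.Icc_of_Ioo {f g : ℝ → ℝ} {a c : ℝ} (hac : a ≠ c) (hf : Continuous f)
    (hg : Continuous g) (hfg : EqOn f g (Ioo a c)) : EqOn f g (Icc a c) := by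
  simpa only [closure_Ioo hac] using hfg.closure hf hg

theorem abs_cfs_error_le {b d h M : ℝ} (hb : 0 < b) (hd : 0 < d) (hh : 0 < h) {N : ℕ}
    (hNh : ((N : ℝ) - 1) * h = 1) {φ s : ℝ → ℝ} (hφ : ContDiff ℝ 2 φ) (hs : ContDiff ℝ 2 s)
    (hLφ : EqOn (contL b d φ) s (Icc 0 1)) (hM : ∀ y ∈ Icc (0 : ℝ) 1, |iteratedDeriv 2 s y| ≤ M)
    {φv : ℕ → ℝ} (hv1 : φv 1 = φ 0) (hvN : φv N = φ 1)
    (hscheme : ∀ j : ℕ, 2 ≤ j → j ≤ N - 1 →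
      -cfsAW b d h * φv (j - 1) + cfsAC b d h * φv j - cfsAE b d h * φv (j + 1) =
        cfsWh b d h s (((j : ℝ) - 1) * h)) :
    ∀ j : ℕ, 1 ≤ j → j ≤ N →
      |φ (((j : ℝ) - 1) * h) - φv j| ≤ 5 / 4 * M * h ^ 2 / b * (((j : ℝ) - 1) * h) := by
  have hM0 : 0 ≤ M := (abs_nonneg _).trans (hM 0 ⟨le_rfl, zero_le_one⟩)
  have hcell : ∀ i : ℕ, 2 ≤ i → i ≤ N - 1 →
      Icc (((i : ℝ) - 1) * h - h) (((i : ℝ) - 1) * h + h) ⊆ Icc 0 1 := fun i hi2 hiN => by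
    have : (2 : ℝ) ≤ i := by exact_mod_cast hi2
    have : (i : ℝ) + 1 ≤ N := by exact_mod_cast (show i + 1 ≤ N by omega)
    exact Icc_subset_Icc (by nlinarith) (by nlinarith)
  refine abs_le_of_threePointOp_le (cfsAW_pos hb hd hh) (cfsAE_pos hb hd hh).le
    (by simp [hv1]) (by rw [hNh, hvN, sub_self]) (by simp) (by positivity) fun i hi2 hiN => ?_
  have hI := hcell i hi2 hiN
  rw [threePointOp_error_eq_cfsTau (by omega) (hscheme i hi2 hiN)
    (hLφ (hI ⟨le_rfl, by linarith⟩)) (hLφ (hI ⟨by linarith, by linarith⟩)),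
    threePointOp_affine _ _ _ _ (by omega), cfsAW_sub_cfsAE hb hd hh,
    div_mul_cancel₀ _ hh.ne', div_mul_cancel₀ _ hb.ne']
  exact abs_cfsTau_le hb hd hh hφ hs (hLφ.mono hI) fun y hy => hM y (hI hy)

/-- uniform second-order convergence of the complete flux scheme:
there exists `C > 0`, independent of `d ∈ (0,1]` and `h`, such that the
discretization error satisfies `|φ(x_j) − φ_j| ≤ C h²` at every grid point. -/
theorem cfs_uniform_convergence (b : ℝ) (hb : 0 < b)
    (s : ℝ → ℝ) (hs : ContDiff ℝ 4 s) (φL φR : ℝ) :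
    ∃ C > (0 : ℝ), ∀ d ∈ Set.Ioc (0 : ℝ) 1,
      ∀ N : ℕ, 3 ≤ N →
        let h : ℝ := 1 / ((N : ℝ) - 1)
        ∀ φ : ℝ → ℝ, ContDiff ℝ 4 φ →
          (∀ x ∈ Set.Ioo (0 : ℝ) 1, -d * iteratedDeriv 2 φ x + b * deriv φ x = s x) →
          φ 0 = φL → φ 1 = φR →
        ∀ φv : ℕ → ℝ, φv 1 = φL → φv N = φR →
          (∀ j : ℕ, 2 ≤ j → j ≤ N - 1 →
            -cfsAW b d h * φv (j - 1) + cfsAC b d h * φv j - cfsAE b d h * φv (j + 1)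
              = cfsWh b d h s (((j : ℝ) - 1) * h)) →
        ∀ j : ℕ, 1 ≤ j → j ≤ N →
          |φ (((j : ℝ) - 1) * h) - φv j| ≤ C * h ^ 2 := by
  obtain ⟨M, hM⟩ := isCompact_Icc.exists_bound_of_continuousOn
    ((hs.continuous_iteratedDeriv 2 (by norm_num)).continuousOn (s := Icc (0 : ℝ) 1))
  have hM0 : 0 ≤ M := (norm_nonneg _).trans (hM 0 ⟨le_rfl, zero_le_one⟩)
  refine ⟨5 / 4 * (M + 1) / b, by positivity, ?_⟩
  intro d hd N hN h φ hφ hode hφ0 hφ1 φv hv1 hvN hscheme j hj1 hjN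
  have hN1 : (0 : ℝ) < N - 1 := by
    have : (3 : ℝ) ≤ N := by exact_mod_cast hN
    linarith
  have hh : 0 < h := one_div_pos.mpr hN1
  have hxj : ((j : ℝ) - 1) * h ≤ 1 := by
    have : (j : ℝ) ≤ N := by exact_mod_cast hjN
    nlinarith [mul_one_div_cancel hN1.ne']
  have hLφ := EqOn.Icc_of_Ioo zero_ne_one (continuous_contL b d (hφ.of_le (by norm_num)))
    hs.continuous hode
  calc |φ (((j : ℝ) - 1) * h) - φv j|
      ≤ 5 / 4 * M * h ^ 2 / b * (((j : ℝ) - 1) * h) :=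
        abs_cfs_error_le hb hd.1 hh (mul_one_div_cancel hN1.ne') (hφ.of_le (by norm_num))
          (hs.of_le (by norm_num)) hLφ hM (hv1.trans hφ0.symm) (hvN.trans hφ1.symm) hscheme
          j hj1 hjN
    _ ≤ 5 / 4 * M * h ^ 2 / b := mul_le_of_le_one_right (by positivity) hxj
    _ = 5 / 4 * M / b * h ^ 2 := by ring
    _ ≤ 5 / 4 * (M + 1) / b * h ^ 2 := by gcongr; linarith
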